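/- Let (X, L) be a Pervin space, g ∈ 𝓛(X, L), and ν, μ bounded valuations on (X, L). Assume that for every nonnegative dyadic rational r and every crescent C ⊆ g⁻¹((r,∞]), ν(C) ≥ r·μ(C). Then ν(C) ≥ (g·μ)(C) for every C in the algebra A(L) generated by L; in particular ν ≥ g·μ on L. -/

import Mathlib

open scoped ENNReal NNReal

variable {X : Type*}

/-- A lattice of subsets of `X`. -/
def IsLatt (L : Set (Set X)) : Prop :=
  ∅ ∈ L ∧ Set.univ ∈ L ∧ (∀ U ∈ L, ∀ V ∈ L, U ∪ V ∈ L) ∧ (∀ U ∈ L, ∀ V ∈ L, U ∩ V ∈ L)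

/-- An ω-topology: a lattice of subsets closed under countable unions. -/
def IsOmegaTop (L : Set (Set X)) : Prop :=
  IsLatt L ∧ ∀ U : ℕ → Set X, (∀ n, U n ∈ L) → (⋃ n, U n) ∈ L

/-- A valuation on `(X, L)`: strict, monotonic, modular. -/
def IsVal (L : Set (Set X)) (ν : Set X → ℝ≥0∞) : Prop :=
  ν ∅ = 0 ∧ (∀ U ∈ L, ∀ V ∈ L, U ⊆ V → ν U ≤ ν V) ∧
    (∀ U ∈ L, ∀ V ∈ L, ν U + ν V = ν (U ∪ V) + ν (U ∩ V))

/-- ω-continuity of a valuation: it preserves suprema of monotone sequences of sets. -/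
def IsOmegaContVal (L : Set (Set X)) (ν : Set X → ℝ≥0∞) : Prop :=
  ∀ U : ℕ → Set X, (∀ n, U n ∈ L) → Monotone U → ν (⋃ n, U n) = ⨆ n, ν (U n)

/-- `𝓛(X, L)`: maps `h : X → ℝ≥0∞` with `h⁻¹((t,∞]) ∈ L` for all `t ≥ 0`. -/
def MemL (L : Set (Set X)) (h : X → ℝ≥0∞) : Prop :=
  ∀ t : ℝ≥0, {x | (t : ℝ≥0∞) < h x} ∈ L

/-- The improper Riemann integral `∫₀^∞ f(t) dt` of an antitonic map `f : ℝ≥0 → ℝ≥0∞`,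
realized as a Lebesgue integral over `(0, ∞)`. -/
noncomputable def riem (f : ℝ≥0 → ℝ≥0∞) : ℝ≥0∞ :=
  ∫⁻ t in Set.Ioi (0 : ℝ), f t.toNNReal

/-- The Choquet integral `∫ h dν = ∫₀^∞ ν(h⁻¹((t,∞])) dt`. -/
noncomputable def choquet (ν : Set X → ℝ≥0∞) (h : X → ℝ≥0∞) : ℝ≥0∞ :=
  riem fun t => ν {x | (t : ℝ≥0∞) < h x}

/-- The characteristic map of `U`. -/
noncomputable def chi (U : Set X) : X → ℝ≥0∞ :=
  U.indicator fun _ => 1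

/-- `(g·μ)(U) := ∫ χ_U·g dμ`. -/
noncomputable def densMul (g : X → ℝ≥0∞) (μ : Set X → ℝ≥0∞) (U : Set X) : ℝ≥0∞ :=
  choquet μ fun x => chi U x * g x

/-- `(g·μ)(C) = ∫₀^∞ μ(C ∩ g⁻¹((t,∞])) dt`, the explicit formula for the density valuation. -/
noncomputable def densF (g : X → ℝ≥0∞) (μ : Set X → ℝ≥0∞) (C : Set X) : ℝ≥0∞ :=
  riem fun t => μ (C ∩ {x | (t : ℝ≥0∞) < g x})

/-- The smallest algebra of subsets of `X` containing `L`. -/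
def genAlg (L : Set (Set X)) : Set (Set X) :=
  {C | ∀ A : Set (Set X),
    (L ⊆ A ∧ ∅ ∈ A ∧ (∀ S ∈ A, Sᶜ ∈ A) ∧ (∀ S ∈ A, ∀ T ∈ A, S ∪ T ∈ A)) → C ∈ A}

/-- A crescent: a difference of two elements of `L`. -/
def IsCrescent (L : Set (Set X)) (C : Set X) : Prop :=
  ∃ U ∈ L, ∃ V ∈ L, C = U \ V

/-- A signed valuation: strict and modular, real-valued. -/
def IsSignedVal (L : Set (Set X)) (ς : Set X → ℝ) : Prop :=
  ς ∅ = 0 ∧ ∀ U ∈ L, ∀ V ∈ L, ς (U ∪ V) + ς (U ∩ V) = ς U + ς V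

/-- The Hahn decomposition property of a signed valuation `ς` on `(X, L)`: stated via any
signed valuation extending `ς` to the generated algebra (such an extension is unique). -/
def HasHahn (L : Set (Set X)) (ς : Set X → ℝ) : Prop :=
  ∀ ς' : Set X → ℝ, IsSignedVal (genAlg L) ς' → (∀ U ∈ L, ς' U = ς U) →
    ∃ U ∈ L, (∀ C, IsCrescent L C → C ⊆ U → 0 ≤ ς' C) ∧
      (∀ C, IsCrescent L C → Disjoint C U → ς' C ≤ 0)

/-- A nonnegative dyadic rational. -/
def IsDyadic (r : ℝ≥0) : Prop := ∃ p n : ℕ, r = (p : ℝ≥0) / 2 ^ n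

/-!
Cut the range of `g` at the levels `kδ`, `δ = 2⁻ⁿ`, and put `Cₖ = C ∩ g⁻¹((kδ, ∞])`. As
`t ↦ μ(C ∩ g⁻¹((t, ∞]))` is antitone, `(g·μ)(C) ≤ Σₖ δ μ(Cₖ)`. By Abel summation,
`Σ_{1 ≤ k ≤ K} δ μ(Cₖ) = Σ_{1 ≤ k < K} kδ μ(Cₖ \ Cₖ₊₁) + Kδ μ(C_K)`, and each term is at most `ν`
of the same set because that set lies in `g⁻¹((kδ, ∞])`; these sets partition `C₁`. Hence
`(g·μ)(C) ≤ δ μ(C) + ν(C)`, and `n → ∞` concludes as `μ(C) < ∞`. The hypothesis, given on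
crescents, holds on all of `A(L)` because the crescents form a semiring of sets, so every element
of `A(L)` is a finite disjoint union of crescents.
-/

open MeasureTheory Filter Topology

section SetAlgebra

variable {L : Set (Set X)}

lemma subset_genAlg : L ⊆ genAlg L :=
  fun _ hU _ hA => hA.1 hU

lemma isSetAlgebra_genAlg (L : Set (Set X)) : IsSetAlgebra (genAlg L) where
  empty_mem _ hA := hA.2.1
  compl_mem _ hC A hA := hA.2.2.1 _ (hC A hA)
  union_mem _ _ hC hD A hA := hA.2.2.2 _ (hC A hA) _ (hD A hA)

lemma genAlg_subset {𝒜 : Set (Set X)} (hL𝒜 : L ⊆ 𝒜) (h𝒜 : IsSetAlgebra 𝒜) : genAlg L ⊆ 𝒜 :=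
  fun _ hC => hC 𝒜 ⟨hL𝒜, h𝒜.empty_mem, h𝒜.compl_mem, fun _ hS _ hT => h𝒜.union_mem hS hT⟩

lemma isSetSemiring_isCrescent (hL : IsLatt L) : IsSetSemiring {C | IsCrescent L C} where
  empty_mem := ⟨∅, hL.1, ∅, hL.1, by simp⟩
  inter_mem := by
    rintro _ ⟨U, hU, V, hV, rfl⟩ _ ⟨U', hU', V', hV', rfl⟩
    exact ⟨U ∩ U', hL.2.2.2 _ hU _ hU', V ∪ V', hL.2.2.1 _ hV _ hV', by ext; simp; tauto⟩
  sdiff_eq_sUnion' := by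
    rintro _ ⟨U, hU, V, hV, rfl⟩ _ ⟨U', hU', V', hV', rfl⟩
    -- the two pieces are separated by membership in `U'`
    refine ⟨{U \ (V ∪ U'), (U ∩ U' ∩ V') \ V}, ?_, ?_, by ext; simp; tauto⟩
    · simp only [Finset.coe_insert, Finset.coe_singleton, Set.insert_subset_iff,
        Set.singleton_subset_iff, Set.mem_ofPred_eq]
      exact ⟨⟨U, hU, _, hL.2.2.1 _ hV _ hU', rfl⟩,
        ⟨_, hL.2.2.2 _ (hL.2.2.2 _ hU _ hU') _ hV', V, hV, rfl⟩⟩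
    · rw [Finset.coe_pair]
      exact Set.pairwise_pair_of_symm.2 fun _ =>
        Set.disjoint_left.2 fun _ hx hx' => hx.2 (Or.inr hx'.1.1.2)

lemma IsCrescent.mem_genAlg {C : Set X} (hC : IsCrescent L C) : C ∈ genAlg L := by
  obtain ⟨U, hU, V, hV, rfl⟩ := hC
  exact (isSetAlgebra_genAlg L).sdiff_mem (subset_genAlg hU) (subset_genAlg hV)

lemma genAlg_subset_supClosure_isCrescent (hL : IsLatt L) :
    genAlg L ⊆ supClosure {C | IsCrescent L C} := by
  have hR := (isSetSemiring_isCrescent hL).isSetRing_supClosure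
  have huniv : Set.univ ∈ supClosure {C | IsCrescent L C} :=
    subset_supClosure ⟨Set.univ, hL.2.1, ∅, hL.1, by simp⟩
  refine genAlg_subset (fun U hU => subset_supClosure ⟨U, hU, ∅, hL.1, by simp⟩) ⟨hR.empty_mem,
    fun C hC => ?_, fun _ _ hC hD => hR.union_mem hC hD⟩
  simpa [Set.compl_eq_univ_sdiff] using hR.sdiff_mem huniv hC

lemma exists_finpartition_isCrescent (hL : IsLatt L) {C : Set X} (hC : C ∈ genAlg L) :
    ∃ P : Finpartition C, ↑P.parts ⊆ {D | IsCrescent L D} :=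
  (isSetSemiring_isCrescent hL).mem_supClosure_iff.1 (genAlg_subset_supClosure_isCrescent hL hC)

end SetAlgebra

section Valuation

variable {𝒜 : Set (Set X)} {μ ν : Set X → ℝ≥0∞}

lemma IsVal.union_of_disjoint (hν : IsVal 𝒜 ν) {C D : Set X} (hC : C ∈ 𝒜) (hD : D ∈ 𝒜)
    (hCD : Disjoint C D) : ν (C ∪ D) = ν C + ν D := by
  rw [hν.2.2 C hC D hD, hCD.inter_eq, hν.1, add_zero]

lemma IsVal.eq_add_sdiff (hν : IsVal 𝒜 ν) (h𝒜 : IsSetRing 𝒜) {C D : Set X} (hC : C ∈ 𝒜)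
    (hD : D ∈ 𝒜) (hDC : D ⊆ C) : ν C = ν D + ν (C \ D) := by
  rw [← hν.union_of_disjoint hD (h𝒜.sdiff_mem hC hD) Set.disjoint_sdiff_right,
    Set.union_sdiff_cancel hDC]

lemma IsVal.eq_sum_finpartition (hν : IsVal 𝒜 ν) (h𝒜 : IsSetRing 𝒜) {C : Set X} (hC : C ∈ 𝒜)
    (P : Finpartition C) (hP : ↑P.parts ⊆ 𝒜) : ν C = ∑ D ∈ P.parts, ν D := by
  have hCP : C = ⋃₀ ↑P.parts := by rw [← Finset.sup_id_set_eq_sUnion, P.sup_parts]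
  conv_lhs => rw [hCP]
  exact addContent_sUnion (m := h𝒜.addContent_of_union ν hν.1 hν.union_of_disjoint) hP
    P.disjoint (hCP ▸ hC)

lemma IsVal.sum_mul_add_le_of_antitone (hμ : IsVal 𝒜 μ) (hν : IsVal 𝒜 ν) (h𝒜 : IsSetRing 𝒜)
    {E : ℕ → Set X} (hE : ∀ j, E j ∈ 𝒜) (hEanti : Antitone E) (δ : ℝ≥0∞)
    (hdom : ∀ j : ℕ, ∀ D ∈ 𝒜, D ⊆ E j → j * δ * μ D ≤ ν D) (K m : ℕ) :
    ∑ k ∈ Finset.range K, δ * μ (E (m + k + 1)) + m * δ * μ (E m) ≤ ν (E m) := by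
  induction K generalizing m with
  | zero => simpa using hdom m (E m) (hE m) le_rfl
  | succ K ih =>
    -- split `E m` into `E (m + 1)`, handled by induction, and the layer `E m \ E (m + 1)`
    have hsub : E (m + 1) ⊆ E m := hEanti m.le_succ
    have hlayer := hdom m _ (h𝒜.sdiff_mem (hE m) (hE (m + 1))) Set.sdiff_subset
    have hrest := ih (m + 1)
    simp only [Nat.cast_add, Nat.cast_one] at hrest
    rw [Finset.sum_range_succ', hμ.eq_add_sdiff h𝒜 (hE m) (hE (m + 1)) hsub,
      hν.eq_add_sdiff h𝒜 (hE m) (hE (m + 1)) hsub]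
    calc ∑ k ∈ Finset.range K, δ * μ (E (m + (k + 1) + 1)) + δ * μ (E (m + 0 + 1)) +
          m * δ * (μ (E (m + 1)) + μ (E m \ E (m + 1)))
        = (∑ k ∈ Finset.range K, δ * μ (E (m + 1 + k + 1)) + (m + 1) * δ * μ (E (m + 1))) +
          m * δ * μ (E m \ E (m + 1)) := by
          simp only [add_zero, add_assoc, add_comm 1]
          ring
      _ ≤ ν (E (m + 1)) + ν (E m \ E (m + 1)) := add_le_add hrest hlayer

end Valuation

lemma riem_le_tsum_mul {f : ℝ≥0 → ℝ≥0∞} (hf : Antitone f) {δ : ℝ≥0} (hδ : 0 < δ) :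
    riem f ≤ ∑' k : ℕ, δ * f (k * δ) := by
  set I : ℕ → Set ℝ := fun k => Set.Ico (k * δ) ((k + 1) * δ)
  have hcover : Set.Ioi (0 : ℝ) ⊆ ⋃ k, I k := by
    intro t ht
    have hδ' : (0 : ℝ) < δ := hδ
    refine Set.mem_iUnion.2 ⟨⌊t / δ⌋₊, ?_, ?_⟩
    · exact (le_div_iff₀ hδ').1 (Nat.floor_le (div_pos ht hδ').le)
    · exact (div_lt_iff₀ hδ').1 (Nat.lt_floor_add_one _)
  have hpiece : ∀ k : ℕ, ∫⁻ t in I k, f t.toNNReal ≤ δ * f (k * δ) := fun k => calc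
    ∫⁻ t in I k, f t.toNNReal ≤ ∫⁻ _ in I k, f (k * δ) :=
        setLIntegral_mono measurable_const fun t ht => hf <| by
          rw [Real.le_toNNReal_iff_coe_le ((by positivity : (0 : ℝ) ≤ k * δ).trans ht.1)]
          exact_mod_cast ht.1
    _ = δ * f (k * δ) := by
        rw [setLIntegral_const, Real.volume_Ico, add_mul, one_mul, add_sub_cancel_left,
          ENNReal.ofReal_coe_nnreal, mul_comm]
  calc riem f ≤ ∫⁻ t in ⋃ k, I k, f t.toNNReal := lintegral_mono_set hcover
    _ ≤ ∑' k, ∫⁻ t in I k, f t.toNNReal := lintegral_iUnion_le _ _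
    _ ≤ ∑' k : ℕ, δ * f (k * δ) := ENNReal.tsum_le_tsum hpiece

section Density

variable {L : Set (Set X)} {g : X → ℝ≥0∞} {μ ν : Set X → ℝ≥0∞}

lemma le_of_isCrescent_le (hL : IsLatt L) (hμ : IsVal (genAlg L) μ)
    (hν : IsVal (genAlg L) ν) {T : Set X} (r : ℝ≥0∞)
    (h : ∀ D, IsCrescent L D → D ⊆ T → r * μ D ≤ ν D) {C : Set X} (hC : C ∈ genAlg L)
    (hCT : C ⊆ T) : r * μ C ≤ ν C := by
  obtain ⟨P, hP⟩ := exists_finpartition_isCrescent hL hC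
  have hPA : ↑P.parts ⊆ genAlg L := fun D hD => (hP hD).mem_genAlg
  have hR := (isSetAlgebra_genAlg L).isSetRing
  rw [hμ.eq_sum_finpartition hR hC P hPA, hν.eq_sum_finpartition hR hC P hPA, Finset.mul_sum]
  exact Finset.sum_le_sum fun D hD => h D (hP hD) ((P.le hD).trans hCT)

lemma densF_le_mul_add (hg : MemL L g) (hμ : IsVal (genAlg L) μ) (hν : IsVal (genAlg L) ν)
    {δ : ℝ≥0} (hδ : 0 < δ)
    (hdom : ∀ k : ℕ, ∀ D ∈ genAlg L, D ⊆ {x | ((k * δ : ℝ≥0) : ℝ≥0∞) < g x} →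
      ((k * δ : ℝ≥0) : ℝ≥0∞) * μ D ≤ ν D)
    {C : Set X} (hC : C ∈ genAlg L) : densF g μ C ≤ δ * μ C + ν C := by
  set S : ℝ≥0 → Set X := fun t => C ∩ {x | (t : ℝ≥0∞) < g x}
  have hS : ∀ t, S t ∈ genAlg L := fun t =>
    (isSetAlgebra_genAlg L).inter_mem hC (subset_genAlg (hg t))
  have hSanti : Antitone S := fun s t hst x hx =>
    ⟨hx.1, lt_of_le_of_lt (ENNReal.coe_le_coe.2 hst) hx.2⟩
  have hE : Antitone fun k : ℕ => S (k * δ) :=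
    hSanti.comp_monotone fun j k hjk => by gcongr
  have htail : ∀ K, ∑ k ∈ Finset.range K, (δ : ℝ≥0∞) * μ (S ((k + 1 : ℕ) * δ)) ≤ ν C := by
    intro K
    have := hμ.sum_mul_add_le_of_antitone hν (isSetAlgebra_genAlg L).isSetRing (fun _ => hS _)
      hE δ (fun j D hD hDj => by exact_mod_cast hdom j D hD fun x hx => (hDj hx).2) K 0
    simp only [zero_add, Nat.cast_zero, zero_mul, add_zero] at this
    exact this.trans (hν.2.1 _ (hS _) _ hC Set.inter_subset_left)
  calc densF g μ C = riem fun t => μ (S t) := rfl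
    _ ≤ ∑' k : ℕ, δ * μ (S (k * δ)) :=
        riem_le_tsum_mul (fun s t hst => hμ.2.1 _ (hS t) _ (hS s) (hSanti hst)) hδ
    _ = δ * μ (S ((0 : ℕ) * δ)) + ∑' k : ℕ, δ * μ (S ((k + 1 : ℕ) * δ)) :=
        tsum_eq_zero_add' ENNReal.summable
    _ ≤ δ * μ C + ν C := by
        gcongr
        · exact hμ.2.1 _ (hS _) _ hC Set.inter_subset_left
        · exact ENNReal.tsum_le_of_sum_range_le htail

lemma densF_le_of_dyadic (hg : MemL L g) (hμ : IsVal (genAlg L) μ) (hν : IsVal (genAlg L) ν)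
    (hdom : ∀ r : ℝ≥0, IsDyadic r → ∀ D ∈ genAlg L, D ⊆ {x | (r : ℝ≥0∞) < g x} →
      (r : ℝ≥0∞) * μ D ≤ ν D)
    {C : Set X} (hC : C ∈ genAlg L) (hμC : μ C ≠ ⊤) : densF g μ C ≤ ν C := by
  have hbound : ∀ n : ℕ, densF g μ C ≤ ((2 ^ n)⁻¹ : ℝ≥0) * μ C + ν C := fun n =>
    densF_le_mul_add hg hμ hν (by positivity)
      (fun k => hdom _ ⟨k, n, (div_eq_mul_inv _ _).symm⟩) hC
  have hlim : Tendsto (fun n : ℕ => (((2 ^ n)⁻¹ : ℝ≥0) : ℝ≥0∞)) atTop (𝓝 0) := by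
    simp_rw [← inv_pow]
    exact ENNReal.tendsto_coe.2 (NNReal.tendsto_pow_atTop_nhds_zero_of_lt_one (by norm_num))
  have := ((ENNReal.Tendsto.mul_const hlim (Or.inr hμC)).add_const (ν C))
  rw [zero_mul, zero_add] at this
  exact ge_of_tendsto' this hbound

lemma densF_congr (hL : IsLatt L) (hg : MemL L g) {μ' : Set X → ℝ≥0∞}
    (hμ' : ∀ V ∈ L, μ' V = μ V) {U : Set X} (hU : U ∈ L) : densF g μ' U = densF g μ U := by
  unfold densF
  congr 1
  funext t
  exact hμ' _ (hL.2.2.2 _ hU _ (hg t))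

end Density

theorem stmt18_general (L : Set (Set X)) (hL : IsLatt L) (g : X → ℝ≥0∞) (hg : MemL L g)
    (ν μ : Set X → ℝ≥0∞)
    (hμb : μ Set.univ < ⊤)
    (ν' μ' : Set X → ℝ≥0∞)
    (hν' : IsVal (genAlg L) ν') (hν'e : ∀ U ∈ L, ν' U = ν U)
    (hμ' : IsVal (genAlg L) μ') (hμ'e : ∀ U ∈ L, μ' U = μ U)
    (hyp : ∀ r : ℝ≥0, IsDyadic r → ∀ C : Set X, IsCrescent L C →
      C ⊆ {x | (r : ℝ≥0∞) < g x} → (r : ℝ≥0∞) * μ' C ≤ ν' C) :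
    (∀ C ∈ genAlg L, densF g μ' C ≤ ν' C) ∧ ∀ U ∈ L, densF g μ U ≤ ν U := by
  have hdom (r : ℝ≥0) (hr : IsDyadic r) (D : Set X) (hD : D ∈ genAlg L)
      (hDg : D ⊆ {x | (r : ℝ≥0∞) < g x}) : (r : ℝ≥0∞) * μ' D ≤ ν' D :=
    le_of_isCrescent_le hL hμ' hν' r (hyp r hr) hD hDg
  have hfin : ∀ C ∈ genAlg L, μ' C ≠ ⊤ := fun C hC =>
    ((hμ'.2.1 _ hC _ (isSetAlgebra_genAlg L).univ_mem (Set.subset_univ C)).trans_lt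
      (hμ'e _ hL.2.1 ▸ hμb)).ne
  have hgen : ∀ C ∈ genAlg L, densF g μ' C ≤ ν' C := fun C hC =>
    densF_le_of_dyadic hg hμ' hν' hdom hC (hfin C hC)
  refine ⟨hgen, fun U hU => ?_⟩
  rw [← densF_congr hL hg hμ'e hU, ← hν'e U hU]
  exact hgen U (subset_genAlg hU)

/-- if `ν(C) ≥ r·μ(C)` for every nonnegative dyadic `r` and every crescent
`C ⊆ g⁻¹((r,∞])`, then `ν(C) ≥ (g·μ)(C)` on the generated algebra; in particular
`ν ≥ g·μ` on `L`. -/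
theorem stmt18 (L : Set (Set X)) (hL : IsLatt L) (g : X → ℝ≥0∞) (hg : MemL L g)
    (ν μ : Set X → ℝ≥0∞) (hν : IsVal L ν) (hμ : IsVal L μ)
    (hνb : ν Set.univ < ⊤) (hμb : μ Set.univ < ⊤)
    (ν' μ' : Set X → ℝ≥0∞)
    (hν' : IsVal (genAlg L) ν') (hν'e : ∀ U ∈ L, ν' U = ν U)
    (hμ' : IsVal (genAlg L) μ') (hμ'e : ∀ U ∈ L, μ' U = μ U)
    (hyp : ∀ r : ℝ≥0, IsDyadic r → ∀ C : Set X, IsCrescent L C →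
      C ⊆ {x | (r : ℝ≥0∞) < g x} → (r : ℝ≥0∞) * μ' C ≤ ν' C) :
    (∀ C ∈ genAlg L, densF g μ' C ≤ ν' C) ∧ ∀ U ∈ L, densF g μ U ≤ ν U :=
  stmt18_general L hL g hg ν μ hμb ν' μ' hν' hν'e hμ' hμ'e hyp
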